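/- arXiv:1211.0680 — 7 statements merged into one kernel-verified Lean document; each statement's English description precedes it below -/
import Mathlib

section
/- Let A > 0 and R > 0, and suppose Σ_{ℓ=0}^{d} Σ_{j=1}^{K} |a_{ℓ,j}| ≤ A. For an integer M ≥ 1 set δ_M = (2πR/A)·M^{−d−2}. Then for every integer k with 1 ≤ k ≤ M, |F_k(ξ, a) − F_k(ξ + δ_M, a)| ≤ R·k^{−d−2}. (Hence the Fourier coefficients of indices 1 through M of the two piecewise polynomials — one with jumps at ξ_1, …, ξ_K and one with jumps at ξ_1 + δ_M, …, ξ_K + δ_M, with the same jump magnitudes — differ by no more than the admissible smooth-part perturbation R·k^{−d−2}, although all jump locations differ by exactly δ_M = (2πR/A)M^{−d−2}; this underlies the fact that no deterministic algorithm can recover jump locations from the first M Fourier coefficients with accuracy asymptotically better than M^{−d−2}.) -/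
open Real Complex

/-- The `k`-th Fourier coefficient of the degree-`d` piecewise polynomial with jump
points `ξ_j` and jump magnitudes `a_{ℓ,j}`:
`F_k(ξ, a) = (1/2π) Σ_{j} e^{−ikξ_j} Σ_{ℓ=0}^{d} (ik)^{−ℓ−1} a_{ℓ,j}`. -/
noncomputable def eckhoffFourierCoeff (d K : ℕ) (k : ℕ) (ξ : Fin K → ℝ) (a : ℕ → Fin K → ℂ) : ℂ :=
  (1 / (2 * (π : ℂ))) * ∑ j : Fin K, Complex.exp (-Complex.I * (k : ℂ) * (ξ j : ℂ)) *
    ∑ ℓ ∈ Finset.range (d + 1), ((Complex.I * (k : ℂ)) ^ (ℓ + 1))⁻¹ * a ℓ j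

/-! Translating every jump by `δ` multiplies `F_k` by the phase `e^{−ikδ}`, so the difference
is `(1 − e^{−ikδ}) F_k`, of norm at most `k|δ| ‖F_k‖`. Since `|(ik)^{−ℓ−1}| ≤ 1/k`, we have
`‖F_k‖ ≤ A/(2πk)`, so the difference is at most `δ A/(2π) = R M^{−d−2} ≤ R k^{−d−2}`. -/

theorem norm_exp_neg_I_mul_ofReal (x : ℝ) : ‖Complex.exp (-Complex.I * x)‖ = 1 := by
  rw [Complex.norm_exp]
  simp

theorem norm_one_sub_exp_neg_I_mul_ofReal_le (x : ℝ) :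
    ‖1 - Complex.exp (-Complex.I * x)‖ ≤ |x| := by
  rw [norm_sub_rev]
  simpa using Real.norm_exp_I_mul_ofReal_sub_one_le (x := -x)

theorem eckhoffFourierCoeff_shift (d K k : ℕ) (ξ : Fin K → ℝ) (a : ℕ → Fin K → ℂ) (δ : ℝ) :
    eckhoffFourierCoeff d K k (fun j => ξ j + δ) a =
      Complex.exp (-Complex.I * (k * δ : ℝ)) * eckhoffFourierCoeff d K k ξ a := by
  simp only [eckhoffFourierCoeff, Finset.mul_sum, ofReal_add, mul_add, Complex.exp_add]
  refine Finset.sum_congr rfl fun j _ => ?_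
  push_cast
  ring_nf

theorem norm_eckhoffFourierCoeff_le (d K : ℕ) {k : ℕ} (hk : 1 ≤ k) (ξ : Fin K → ℝ)
    (a : ℕ → Fin K → ℂ) :
    ‖eckhoffFourierCoeff d K k ξ a‖ ≤
      (2 * π * k)⁻¹ * ∑ ℓ ∈ Finset.range (d + 1), ∑ j : Fin K, ‖a ℓ j‖ := by
  have hk1 : (1 : ℝ) ≤ k := by exact_mod_cast hk
  have hcoeff (ℓ : ℕ) : ‖((Complex.I * k) ^ (ℓ + 1))⁻¹‖ ≤ (k : ℝ)⁻¹ := by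
    rw [norm_inv, norm_pow, norm_mul, Complex.norm_I, one_mul, Complex.norm_natCast]
    exact inv_anti₀ (by positivity) (le_self_pow₀ hk1 ℓ.succ_ne_zero)
  have hjump (j : Fin K) :
      ‖∑ ℓ ∈ Finset.range (d + 1), ((Complex.I * k) ^ (ℓ + 1))⁻¹ * a ℓ j‖ ≤
        ∑ ℓ ∈ Finset.range (d + 1), (k : ℝ)⁻¹ * ‖a ℓ j‖ :=
    (norm_sum_le _ _).trans <| Finset.sum_le_sum fun ℓ _ =>
      (norm_mul_le _ _).trans <| mul_le_mul_of_nonneg_right (hcoeff ℓ) (norm_nonneg _)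
  calc ‖eckhoffFourierCoeff d K k ξ a‖
      ≤ (2 * π)⁻¹ * ∑ j : Fin K, ∑ ℓ ∈ Finset.range (d + 1), (k : ℝ)⁻¹ * ‖a ℓ j‖ := by
        rw [eckhoffFourierCoeff, norm_mul, one_div, norm_inv, norm_mul, Complex.norm_ofNat,
          Complex.norm_real, Real.norm_of_nonneg pi_pos.le]
        gcongr
        refine (norm_sum_le _ _).trans (Finset.sum_le_sum fun j _ => ?_)
        rw [norm_mul, mul_assoc, ← ofReal_natCast, ← ofReal_mul, norm_exp_neg_I_mul_ofReal,
          one_mul]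
        exact hjump j
    _ = (2 * π * k)⁻¹ * ∑ ℓ ∈ Finset.range (d + 1), ∑ j : Fin K, ‖a ℓ j‖ := by
        rw [Finset.sum_comm]
        simp only [← Finset.mul_sum]
        ring

theorem norm_eckhoffFourierCoeff_sub_shift_le (d K : ℕ) {k : ℕ} (hk : 1 ≤ k) (ξ : Fin K → ℝ)
    (a : ℕ → Fin K → ℂ) (δ : ℝ) :
    ‖eckhoffFourierCoeff d K k ξ a - eckhoffFourierCoeff d K k (fun j => ξ j + δ) a‖ ≤
      |δ| / (2 * π) * ∑ ℓ ∈ Finset.range (d + 1), ∑ j : Fin K, ‖a ℓ j‖ := by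
  rw [eckhoffFourierCoeff_shift, ← one_sub_mul, norm_mul]
  calc ‖1 - Complex.exp (-Complex.I * (k * δ : ℝ))‖ * ‖eckhoffFourierCoeff d K k ξ a‖
      ≤ |k * δ| * ((2 * π * k)⁻¹ * ∑ ℓ ∈ Finset.range (d + 1), ∑ j : Fin K, ‖a ℓ j‖) :=
        mul_le_mul (norm_one_sub_exp_neg_I_mul_ofReal_le _) (norm_eckhoffFourierCoeff_le d K hk ξ a)
          (norm_nonneg _) (abs_nonneg _)
    _ = |δ| / (2 * π) * ∑ ℓ ∈ Finset.range (d + 1), ∑ j : Fin K, ‖a ℓ j‖ := by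
        rw [abs_mul, Nat.abs_cast]
        field_simp

theorem eckhoffFourierCoeff_shift_within_noise_general (d K : ℕ)
    (ξ : Fin K → ℝ) (a : ℕ → Fin K → ℂ)
    (A R : ℝ) (hA : 0 < A) (hR : 0 < R)
    (ha : ∑ ℓ ∈ Finset.range (d + 1), ∑ j : Fin K, ‖a ℓ j‖ ≤ A)
    (M : ℕ) :
    ∀ k : ℕ, 1 ≤ k → k ≤ M →
      ‖eckhoffFourierCoeff d K k ξ a -
          eckhoffFourierCoeff d K k
            (fun j => ξ j + (2 * π * R / A) * ((M : ℝ) ^ (d + 2))⁻¹) a‖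
        ≤ R * ((k : ℝ) ^ (d + 2))⁻¹ := by
  intro k hk hkM
  set δ := (2 * π * R / A) * ((M : ℝ) ^ (d + 2))⁻¹ with hδ_def
  have hδ : 0 ≤ δ := by positivity
  calc _ ≤ |δ| / (2 * π) * ∑ ℓ ∈ Finset.range (d + 1), ∑ j : Fin K, ‖a ℓ j‖ :=
        norm_eckhoffFourierCoeff_sub_shift_le d K hk ξ a δ
    _ ≤ δ / (2 * π) * A := by
        rw [abs_of_nonneg hδ]
        gcongr
    _ = R * ((M : ℝ) ^ (d + 2))⁻¹ := by
        rw [hδ_def]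
        field_simp
    _ ≤ R * ((k : ℝ) ^ (d + 2))⁻¹ := by
        gcongr

/-- if `Σ_{ℓ,j}|a_{ℓ,j}| ≤ A` and `δ_M = (2πR/A)·M^{−d−2}`, then for all
`1 ≤ k ≤ M` the Fourier coefficients of the shifted and unshifted piecewise polynomials
differ by at most `R·k^{−d−2}`. -/
theorem eckhoffFourierCoeff_shift_within_noise (d K : ℕ) (hK : 1 ≤ K)
    (ξ : Fin K → ℝ) (a : ℕ → Fin K → ℂ)
    (A R : ℝ) (hA : 0 < A) (hR : 0 < R)
    (ha : ∑ ℓ ∈ Finset.range (d + 1), ∑ j : Fin K, ‖a ℓ j‖ ≤ A)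
    (M : ℕ) (hM : 1 ≤ M) :
    ∀ k : ℕ, 1 ≤ k → k ≤ M →
      ‖eckhoffFourierCoeff d K k ξ a -
          eckhoffFourierCoeff d K k
            (fun j => ξ j + (2 * π * R / A) * ((M : ℝ) ^ (d + 2))⁻¹) a‖
        ≤ R * ((k : ℝ) ^ (d + 2))⁻¹ :=
  eckhoffFourierCoeff_shift_within_noise_general d K ξ a A R hA hR ha M
end

section
/- The point u = z = ω^N is a root of the polynomial p_N^d, i.e. p_N^d(ω^N) = 0. -/
/-!
Write `m_k = ω^k P(k)` with `P = Σ_ℓ α_ℓ X^ℓ` of degree at most `d`. At `u = ω^N` every term of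
`p_N^d` carries the same power `ω^{(j+1)N} ω^{N(d+1-j)} = ω^{(d+2)N}`, so `p_N^d(ω^N)` is
`ω^{(d+2)N}` times `Σ_j (-1)^j C(d+1,j) P((j+1)N)`, which is up to sign the `(d+1)`-st forward
difference at `0` of the degree-`≤ d` polynomial `j ↦ P(Nj + N)`, hence zero.
-/

open Complex

/-- `m_k = ω^k · Σ_{ℓ=0}^{d} α_ℓ k^ℓ`. -/
noncomputable def eckhoffM (d : ℕ) (ω : ℂ) (α : ℕ → ℂ) (k : ℕ) : ℂ :=
  ω ^ k * ∑ ℓ ∈ Finset.range (d + 1), α ℓ * (k : ℂ) ^ ℓ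

/-- `p_N^d(u) = Σ_{j=0}^{d+1} (−1)^j C(d+1, j) m_{(j+1)N} u^{d+1−j}`. -/
noncomputable def eckhoffP (d N : ℕ) (ω : ℂ) (α : ℕ → ℂ) (u : ℂ) : ℂ :=
  ∑ j ∈ Finset.range (d + 2),
    (-1 : ℂ) ^ j * ((d + 1).choose j : ℂ) * eckhoffM d ω α ((j + 1) * N) * u ^ (d + 1 - j)

open Finset Polynomial

theorem Polynomial.sum_range_neg_one_pow_mul_choose_mul_eval_eq_zero {R : Type*} [CommRing R]
    {P : R[X]} {n : ℕ} (hP : P.natDegree < n) :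
    ∑ k ∈ range (n + 1), (-1 : R) ^ k * n.choose k * P.eval (k : R) = 0 := by
  have hΔ := congr_fun (fwdDiff_iter_eq_zero_of_degree_lt hP) 0
  rw [fwdDiff_iter_eq_sum_shift] at hΔ
  calc ∑ k ∈ range (n + 1), (-1 : R) ^ k * n.choose k * P.eval (k : R)
      = (-1) ^ n *
          ∑ k ∈ range (n + 1), ((-1 : ℤ) ^ (n - k) * n.choose k) • P.eval (0 + k • 1) := by
        rw [mul_sum]
        refine sum_congr rfl fun k hk ↦ ?_
        have hsign : (-1 : R) ^ k = (-1) ^ n * (-1) ^ (n - k) := by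
          rw [← pow_add, show n + (n - k) = k + 2 * (n - k) by grind, pow_add,
            pow_mul, neg_one_sq, one_pow, mul_one]
        simp [hsign, zsmul_eq_mul, mul_assoc]
    _ = 0 := by rw [hΔ, Pi.zero_apply, mul_zero]

noncomputable def eckhoffPoly (d : ℕ) (α : ℕ → ℂ) : ℂ[X] :=
  ∑ ℓ ∈ range (d + 1), C (α ℓ) * X ^ ℓ

lemma natDegree_eckhoffPoly_le (d : ℕ) (α : ℕ → ℂ) : (eckhoffPoly d α).natDegree ≤ d :=
  natDegree_sum_le_of_forall_le _ _ fun _ hℓ ↦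
    (natDegree_C_mul_X_pow_le _ _).trans (Nat.lt_succ_iff.mp (mem_range.mp hℓ))

lemma eckhoffM_eq_pow_mul_eval (d : ℕ) (ω : ℂ) (α : ℕ → ℂ) (k : ℕ) :
    eckhoffM d ω α k = ω ^ k * (eckhoffPoly d α).eval (k : ℂ) := by
  simp [eckhoffM, eckhoffPoly, eval_finsetSum]

lemma eckhoffP_pow_eq_pow_mul_sum (d N : ℕ) (ω : ℂ) (α : ℕ → ℂ) :
    eckhoffP d N ω α (ω ^ N) = ω ^ ((d + 2) * N) * ∑ j ∈ range (d + 2),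
      (-1 : ℂ) ^ j * (d + 1).choose j *
        ((eckhoffPoly d α).comp (C (N : ℂ) * X + C (N : ℂ))).eval (j : ℂ) := by
  rw [eckhoffP, mul_sum]
  refine sum_congr rfl fun j hj ↦ ?_
  have hω : ω ^ ((j + 1) * N) * (ω ^ N) ^ (d + 1 - j) = ω ^ ((d + 2) * N) := by
    rw [← pow_mul, ← pow_add]
    congr 1
    have hj : j ≤ d + 1 := Nat.lt_succ_iff.mp (mem_range.mp hj)
    zify [hj]
    ring
  have harg : (((j + 1) * N : ℕ) : ℂ) = (C (N : ℂ) * X + C (N : ℂ)).eval (j : ℂ) := by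
    push_cast
    simp only [eval_add, eval_mul, eval_C, eval_X]
    ring
  rw [eckhoffM_eq_pow_mul_eval, harg, ← eval_comp, ← hω]
  ring

theorem eckhoffP_root_z_general (d N : ℕ) (ω : ℂ) (α : ℕ → ℂ) :
    eckhoffP d N ω α (ω ^ N) = 0 := by
  have hdeg : ((eckhoffPoly d α).comp (C (N : ℂ) * X + C (N : ℂ))).natDegree < d + 1 :=
    calc _ ≤ (eckhoffPoly d α).natDegree * (C (N : ℂ) * X + C (N : ℂ)).natDegree :=
          natDegree_comp_le
      _ ≤ d * 1 := Nat.mul_le_mul (natDegree_eckhoffPoly_le d α) natDegree_linear_le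
      _ < d + 1 := by omega
  rw [eckhoffP_pow_eq_pow_mul_sum, sum_range_neg_one_pow_mul_choose_mul_eval_eq_zero hdeg, mul_zero]

/-- the point `u = z = ω^N` is a root of `p_N^d`. -/
theorem eckhoffP_root_z (d N : ℕ) (hN : 1 ≤ N) (ω : ℂ) (α : ℕ → ℂ) :
    eckhoffP d N ω α (ω ^ N) = 0 :=
  eckhoffP_root_z_general d N ω α
end

section
/- For every integer d ≥ 0, the polynomial s_d^d is square-free (it has no repeated complex roots), and every complex root of s_d^d is real and lies in the interval [1, ∞). -/
/-!
With `u = 1/w`, `s_d^d` is the reflection of `U_d = (u d/du)^d (u (1 - u)^(d+1))`.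
Each application of `u d/du` lowers the multiplicity of the root `1` by one and, by Rolle's
theorem, puts a new root strictly between any two consecutive roots in `[0, 1]`. Hence `U_d` has
`d + 2` distinct roots in `[0, 1]`, one of them `0`; inverting the other `d + 1` gives `d + 1`
distinct roots of `s_d^d` in `[1, ∞)`, which are all of its roots since it has degree `d + 1`.
-/

/-- The polynomial `s_d^d(w) = Σ_{j=0}^{d+1} (−1)^j C(d+1, j) (j+1)^d w^{d+1−j}` over `ℂ`. -/
noncomputable def eckhoffSPoly (d : ℕ) : Polynomial ℂ :=
  ∑ j ∈ Finset.range (d + 2),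
    Polynomial.C ((-1 : ℂ) ^ j * ((d + 1).choose j : ℂ) * ((j : ℂ) + 1) ^ d) *
      Polynomial.X ^ (d + 1 - j)

open Polynomial Finset

namespace Polynomial

theorem reflect_sum {R ι : Type*} [Semiring R] (N : ℕ) (s : Finset ι) (f : ι → R[X]) :
    reflect N (∑ i ∈ s, f i) = ∑ i ∈ s, reflect N (f i) :=
  map_sum (⟨⟨reflect N, reflect_zero⟩, fun f g => reflect_add f g N⟩ : R[X] →+ R[X]) f s

theorem card_roots_toFinset_Icc_le_derivative (p : ℝ[X]) (a b : ℝ) :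
    #{x ∈ p.roots.toFinset | x ∈ Set.Icc a b} ≤
      #{x ∈ (derivative p).roots.toFinset | x ∈ Set.Ioo a b} + 1 := by
  rcases eq_or_ne (derivative p) 0 with hp' | hp'
  · rw [eq_C_of_derivative_eq_zero hp']
    simp
  have hp : p ≠ 0 := ne_of_apply_ne derivative (by rwa [derivative_zero])
  refine (card_le_sdiff_of_interleaved
    (t := {x ∈ (derivative p).roots.toFinset | x ∈ Set.Ioo a b})
    fun x hx y hy hxy _ => ?_).trans (Nat.add_le_add_right (card_le_card sdiff_subset) 1)
  simp only [mem_filter, Multiset.mem_toFinset, mem_roots hp] at hx hy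
  obtain ⟨z, hz, hz0⟩ := exists_deriv_eq_zero hxy p.continuousOn (hx.1.trans hy.1.symm)
  refine ⟨z, ?_, hz⟩
  rw [mem_filter, Multiset.mem_toFinset, mem_roots hp', IsRoot, ← p.deriv]
  exact ⟨hz0, hx.2.1.trans_lt hz.1, hz.2.trans_le hy.2.2⟩

theorem squarefree_and_roots_toFinset_eq {K : Type*} [Field K] [DecidableEq K] {p : K[X]}
    (hp : p ≠ 0) {s : Finset K} (hs : ∀ x ∈ s, p.IsRoot x) (hcard : p.natDegree ≤ #s) :
    Squarefree p ∧ p.roots.toFinset = s := by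
  have hsub : s ⊆ p.roots.toFinset := fun x hx => by
    rw [Multiset.mem_toFinset, mem_roots hp]
    exact hs x hx
  have h₁ := card_le_card hsub
  have h₂ := Multiset.toFinset_card_le p.roots
  have h₃ := card_roots' p
  have hnodup : p.roots.Nodup := Multiset.toFinset_card_eq_card_iff_nodup.mp (by omega)
  have hsplits : p.Splits := splits_iff_card_roots.mpr (by omega)
  exact ⟨((nodup_roots_iff_of_splits hp hsplits).mp hnodup).squarefree,
    (eq_of_subset_of_card_le hsub (by omega)).symm⟩

end Polynomial

/-- `eckhoffU d i = (X d/dX)^i (X (1 - X)^(d+1))`, written out by its coefficients. -/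
noncomputable def eckhoffU (d i : ℕ) : ℝ[X] :=
  ∑ j ∈ range (d + 2), C ((-1) ^ j * (d + 1).choose j * ((j : ℝ) + 1) ^ i) * X ^ (j + 1)

section eckhoffU

variable (d : ℕ)

theorem eckhoffU_zero : eckhoffU d 0 = X * (1 - X) ^ (d + 1) := by
  rw [eckhoffU, sub_eq_neg_add, add_pow, mul_sum]
  refine sum_congr rfl fun j _ => ?_
  simp only [C_mul, C_pow, C_neg, C_1, map_natCast, pow_zero, one_pow]
  rw [neg_pow]
  ring

theorem eckhoffU_succ (i : ℕ) : eckhoffU d (i + 1) = X * derivative (eckhoffU d i) := by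
  rw [eckhoffU, eckhoffU, derivative_sum, mul_sum]
  refine sum_congr rfl fun j _ => ?_
  rw [derivative_C_mul_X_pow]
  simp only [C_mul, C_pow, C_add, C_1, map_natCast, Nat.cast_add, Nat.cast_one,
    add_tsub_cancel_right]
  ring

theorem coeff_eckhoffU_add_two (i : ℕ) :
    (eckhoffU d i).coeff (d + 2) = (-1) ^ (d + 1) * ((d : ℝ) + 2) ^ i := by
  rw [eckhoffU, finsetSum_coeff, sum_eq_single_of_mem (d + 1) (self_mem_range_succ _)]
  · simp only [coeff_C_mul_X_pow, Nat.choose_self]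
    push_cast
    ring
  · intro j hj hne
    rw [coeff_C_mul_X_pow, if_neg (by omega)]

theorem eckhoffU_ne_zero (i : ℕ) : eckhoffU d i ≠ 0 := fun h => by
  have h_top := coeff_eckhoffU_add_two d i
  rw [h, coeff_zero] at h_top
  exact mul_ne_zero (by simp) (by positivity) h_top.symm

theorem natDegree_eckhoffU_le (i : ℕ) : (eckhoffU d i).natDegree ≤ d + 2 :=
  natDegree_sum_le_of_forall_le _ _ fun j hj =>
    (natDegree_C_mul_X_pow_le _ _).trans (by rw [mem_range] at hj; omega)

theorem eckhoffU_isRoot_zero (i : ℕ) : (eckhoffU d i).IsRoot 0 := by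
  simp [eckhoffU, eval_finsetSum]

theorem X_sub_C_one_pow_dvd_eckhoffU {i : ℕ} (hi : i ≤ d) :
    (X - C 1) ^ (d + 1 - i) ∣ eckhoffU d i := by
  induction i with
  | zero =>
    have h : X - C 1 ∣ (1 - X : ℝ[X]) := ⟨-1, by rw [C_1]; ring⟩
    rw [eckhoffU_zero]
    exact dvd_mul_of_dvd_right (pow_dvd_pow_of_dvd h _) X
  | succ i ih =>
    rw [eckhoffU_succ]
    exact dvd_mul_of_dvd_right (pow_sub_one_dvd_derivative_of_pow_dvd (ih (by omega))) _

theorem eckhoffU_isRoot_one {i : ℕ} (hi : i ≤ d) : (eckhoffU d i).IsRoot 1 :=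
  dvd_iff_isRoot.mp
    ((dvd_pow_self (X - C 1) (by omega : d + 1 - i ≠ 0)).trans (X_sub_C_one_pow_dvd_eckhoffU d hi))

theorem card_roots_eckhoffU_Icc {i : ℕ} (hi : i ≤ d) :
    i + 2 ≤ #{x ∈ (eckhoffU d i).roots.toFinset | x ∈ Set.Icc 0 1} := by
  induction i with
  | zero =>
    refine (card_pair zero_ne_one).ge.trans (card_le_card fun x hx => ?_)
    simp only [mem_filter, Multiset.mem_toFinset, mem_roots (eckhoffU_ne_zero d 0)]
    rcases mem_insert.mp hx with rfl | hx
    · exact ⟨eckhoffU_isRoot_zero d 0, by simp⟩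
    · rw [mem_singleton.mp hx]
      exact ⟨eckhoffU_isRoot_one d hi, by simp⟩
  | succ i ih =>
    have h_rolle := card_roots_toFinset_Icc_le_derivative (eckhoffU d i) 0 1
    set t := {x ∈ (derivative (eckhoffU d i)).roots.toFinset | x ∈ Set.Ioo 0 1}
    have h_sub : insert 0 (insert 1 t) ⊆
        {x ∈ (eckhoffU d (i + 1)).roots.toFinset | x ∈ Set.Icc 0 1} := by
      intro x hx
      simp only [mem_insert, mem_filter, t, Multiset.mem_toFinset, mem_roots', IsRoot.def] at hx
      simp only [mem_filter, Multiset.mem_toFinset, mem_roots (eckhoffU_ne_zero d _)]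
      rcases hx with rfl | rfl | ⟨⟨-, hx⟩, hx01⟩
      · exact ⟨eckhoffU_isRoot_zero d _, by simp⟩
      · exact ⟨eckhoffU_isRoot_one d hi, by simp⟩
      · rw [eckhoffU_succ]
        exact ⟨by simp [hx], Set.Ioo_subset_Icc_self hx01⟩
    have h_card : #(insert 0 (insert 1 t)) = #t + 2 := by
      rw [card_insert_of_notMem, card_insert_of_notMem] <;> simp [t]
    have h_le := card_le_card h_sub
    have h_ih := ih (by omega)
    omega

end eckhoffU

theorem eckhoffSPoly_eq_map_reflect (d : ℕ) :
    eckhoffSPoly d = (reflect (d + 2) (eckhoffU d d)).map (algebraMap ℝ ℂ) := by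
  rw [eckhoffSPoly, eckhoffU, reflect_sum, Polynomial.map_sum]
  refine sum_congr rfl fun j hj => ?_
  rw [reflect_C_mul_X_pow, revAt_le (by rw [mem_range] at hj; omega), Polynomial.map_mul, map_C,
    Polynomial.map_pow, map_X, show d + 2 - (j + 1) = d + 1 - j by omega]
  simp

theorem eckhoffSPoly_ne_zero (d : ℕ) : eckhoffSPoly d ≠ 0 := by
  rw [eckhoffSPoly_eq_map_reflect, Polynomial.map_ne_zero_iff (algebraMap ℝ ℂ).injective,
    Ne, reflect_eq_zero_iff]
  exact eckhoffU_ne_zero d d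

theorem natDegree_eckhoffSPoly_le (d : ℕ) : (eckhoffSPoly d).natDegree ≤ d + 1 :=
  natDegree_sum_le_of_forall_le _ _ fun _ _ => (natDegree_C_mul_X_pow_le _ _).trans (by omega)

theorem eckhoffSPoly_isRoot_inv (d : ℕ) {r : ℝ} (hr : r ≠ 0) (h : (eckhoffU d d).IsRoot r) :
    (eckhoffSPoly d).IsRoot (r : ℂ)⁻¹ := by
  have : Invertible (r : ℂ) := invertibleOfNonzero (by exact_mod_cast hr)
  rw [eckhoffSPoly_eq_map_reflect, IsRoot, eval_map, ← invOf_eq_inv,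
    eval₂_reflect_eq_zero_iff _ _ _ _ (natDegree_eckhoffU_le d d), ← Complex.coe_algebraMap,
    eval₂_at_apply, h.eq_zero, map_zero]

theorem exists_finset_roots_eckhoffSPoly (d : ℕ) :
    ∃ T : Finset ℂ, d + 1 ≤ #T ∧
      ∀ z ∈ T, (eckhoffSPoly d).IsRoot z ∧ ∃ x : ℝ, 1 ≤ x ∧ z = (x : ℂ) := by
  set S := {x ∈ (eckhoffU d d).roots.toFinset | x ∈ Set.Icc 0 1}
  have h0S : 0 ∈ S := by
    simp only [S, mem_filter, Multiset.mem_toFinset, mem_roots (eckhoffU_ne_zero d d)]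
    exact ⟨eckhoffU_isRoot_zero d d, by simp⟩
  have h_inj : Function.Injective fun r : ℝ => (r : ℂ)⁻¹ :=
    inv_injective.comp Complex.ofReal_injective
  refine ⟨(S.erase 0).image fun r : ℝ => (r : ℂ)⁻¹, ?_, fun z hz => ?_⟩
  · rw [card_image_of_injective _ h_inj, card_erase_of_mem h0S]
    have h_S : d + 2 ≤ #S := card_roots_eckhoffU_Icc d le_rfl
    omega
  · obtain ⟨r, hr, rfl⟩ := mem_image.mp hz
    simp only [mem_erase, S, mem_filter, Multiset.mem_toFinset, mem_roots'] at hr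
    obtain ⟨hr0, ⟨-, hroot⟩, hr_nonneg, hr_le⟩ := hr
    have hr_pos : 0 < r := lt_of_le_of_ne hr_nonneg (Ne.symm hr0)
    exact ⟨eckhoffSPoly_isRoot_inv d hr0 hroot, r⁻¹, (one_le_inv₀ hr_pos).mpr hr_le,
      by push_cast; rfl⟩

/-- `s_d^d` is square-free and all of its complex roots are real and lie
in `[1, ∞)`. -/
theorem eckhoffSPoly_squarefree_real_roots (d : ℕ) :
    Squarefree (eckhoffSPoly d) ∧
    ∀ z : ℂ, (eckhoffSPoly d).IsRoot z → ∃ x : ℝ, 1 ≤ x ∧ z = (x : ℂ) := by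
  obtain ⟨T, hT_card, hT⟩ := exists_finset_roots_eckhoffSPoly d
  obtain ⟨h_sq, h_roots⟩ := squarefree_and_roots_toFinset_eq (eckhoffSPoly_ne_zero d)
    (fun z hz => (hT z hz).1) ((natDegree_eckhoffSPoly_le d).trans hT_card)
  refine ⟨h_sq, fun z hz => (hT z ?_).2⟩
  rw [← h_roots, Multiset.mem_toFinset, mem_roots (eckhoffSPoly_ne_zero d)]
  exact hz
end

section
/- Fix an integer d ≥ 0, a complex number ω with |ω| = 1, and complex numbers α_0, …, α_d with α_d ≠ 0, and let 1 = w_1 < w_2 < … < w_{d+1} denote the d+1 (real, simple) roots of s_d^d. Then for every ε > 0 there exists N_0 such that for every integer N ≥ N_0, the polynomial p_N^d has degree exactly d+1, and its d+1 complex roots (counted with multiplicity) can be enumerated as u_1^{(N)}, …, u_{d+1}^{(N)} so that |u_r^{(N)} − ω^N w_r| ≤ ε for every r = 1, …, d+1. -/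
/-!
Substituting `u = ω ^ N x` collapses `p_N^d` to `ω ^ (N (d + 2)) Σ_ℓ α_ℓ N ^ ℓ s_ℓ^d(x)`. At a root
`w_r` of `s_d^d` the top term vanishes, so `|p_N^d(ω ^ N w_r)| = o(N ^ d)`, whereas the leading
coefficient `m_N` has size `≍ |α_d| N ^ d`. Since `|p(a)| = |lc p| ∏ |a - u|` over the roots `u`,
each `ω ^ N w_r` then has a root within `δ`; for `2δ` below the gaps between the `w_r` these roots
are distinct, and as there are `d + 1` of them they are all the roots.
-/

open Complex

/-- `p_N^d(u) = Σ_{j=0}^{d+1} (−1)^j C(d+1, j) m_{(j+1)N} u^{d+1−j}` as a polynomial. -/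
noncomputable def eckhoffPPoly (d N : ℕ) (ω : ℂ) (α : ℕ → ℂ) : Polynomial ℂ :=
  ∑ j ∈ Finset.range (d + 2),
    Polynomial.C ((-1 : ℂ) ^ j * ((d + 1).choose j : ℂ) * eckhoffM d ω α ((j + 1) * N)) *
      Polynomial.X ^ (d + 1 - j)

/-- `s_i^d(w) = Σ_{j=0}^{d+1} (−1)^j C(d+1, j) (j+1)^i w^{d+1−j}` (as a real function). -/
noncomputable def eckhoffS (d i : ℕ) (w : ℝ) : ℝ :=
  ∑ j ∈ Finset.range (d + 2),
    (-1 : ℝ) ^ j * ((d + 1).choose j : ℝ) * ((j : ℝ) + 1) ^ i * w ^ (d + 1 - j)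

open Polynomial Filter Topology

section RootLocation

variable {K : Type*} [NormedField K] [IsAlgClosed K]

theorem Polynomial.norm_leadingCoeff_mul_pow_le_norm_eval (p : K[X]) {a : K} {δ : ℝ}
    (hδ : 0 ≤ δ) (h : ∀ u ∈ p.roots, δ ≤ ‖a - u‖) :
    ‖p.leadingCoeff‖ * δ ^ p.natDegree ≤ ‖p.eval a‖ := by
  have hcard : Multiset.card p.roots = p.natDegree := IsAlgClosed.card_roots_eq_natDegree
  have heval : p.eval a = p.leadingCoeff * (p.roots.map (a - ·)).prod := by
    conv_lhs => rw [← C_leadingCoeff_mul_prod_multiset_X_sub_C hcard]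
    simp [eval_multiset_prod, Multiset.map_map]
  have hprod : δ ^ p.natDegree ≤ ‖(p.roots.map (a - ·)).prod‖ :=
    calc δ ^ p.natDegree = (p.roots.map fun _ => δ).prod := by simp [hcard]
      _ ≤ (p.roots.map fun u => ‖a - u‖).prod :=
        Multiset.prod_map_le_prod_map₀ _ _ (fun _ _ => hδ) h
      _ = ‖(p.roots.map (a - ·)).prod‖ := by
        rw [← normHom_apply, map_multiset_prod, Multiset.map_map]; rfl
  rw [heval, norm_mul]
  gcongr

theorem Polynomial.exists_mem_roots_norm_sub_lt (p : K[X]) {a : K} {δ : ℝ} (hδ : 0 ≤ δ)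
    (h : ‖p.eval a‖ < ‖p.leadingCoeff‖ * δ ^ p.natDegree) : ∃ u ∈ p.roots, ‖a - u‖ < δ := by
  by_contra! hfar
  exact (p.norm_leadingCoeff_mul_pow_le_norm_eval hδ hfar).not_gt h

theorem Polynomial.exists_roots_eq_map_of_norm_eval_lt {ι : Type*} [Fintype ι] (p : K[X])
    (hcard : p.natDegree = Fintype.card ι) (z : ι → K) {δ : ℝ} (hδ : 0 ≤ δ)
    (hsep : Pairwise fun i j => 2 * δ ≤ ‖z i - z j‖)
    (heval : ∀ i, ‖p.eval (z i)‖ < ‖p.leadingCoeff‖ * δ ^ p.natDegree) :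
    ∃ u : ι → K, p.roots = Multiset.map u Finset.univ.val ∧ ∀ i, ‖u i - z i‖ < δ := by
  choose u hroot hnear using fun i => p.exists_mem_roots_norm_sub_lt hδ (heval i)
  have hinj : Function.Injective u := by
    intro i j hij
    by_contra hne
    have htri := norm_sub_le_norm_sub_add_norm_sub (z i) (u j) (z j)
    rw [norm_sub_rev (u j)] at htri
    linarith [hsep hne, hij ▸ hnear i, hnear j]
  have hle : Multiset.map u Finset.univ.val ≤ p.roots := by
    refine (Multiset.le_iff_subset (Finset.univ.nodup.map hinj)).mpr fun x hx => ?_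
    obtain ⟨i, -, rfl⟩ := Multiset.mem_map.mp hx
    exact hroot i
  refine ⟨u, (Multiset.eq_of_le_of_card_le hle ?_).symm, fun i => norm_sub_rev (z i) _ ▸ hnear i⟩
  simp [IsAlgClosed.card_roots_eq_natDegree, hcard]

end RootLocation

theorem exists_pos_pairwise_lt_dist {ι X : Type*} [Finite ι] [MetricSpace X] {z : ι → X}
    (hz : Function.Injective z) : ∃ δ > 0, Pairwise fun i j => δ < dist (z i) (z j) := by
  have hsmall : ∀ᶠ δ in 𝓝 (0 : ℝ), ∀ i j, i ≠ j → δ < dist (z i) (z j) := by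
    refine eventually_all.2 fun i => eventually_all.2 fun j => ?_
    by_cases hij : i = j
    · simp [hij]
    · exact (eventually_lt_nhds (dist_pos.2 (hz.ne hij))).mono fun _ h _ => h
  exact ((hsmall.filter_mono nhdsWithin_le_nhds).and
    (self_mem_nhdsWithin : ∀ᶠ δ in 𝓝[>] (0 : ℝ), δ ∈ Set.Ioi 0)).exists.imp
    fun δ h => ⟨h.2, h.1⟩

section Asymptotics

variable {𝕜 : Type*} [RCLike 𝕜]

theorem tendsto_natCast_pow_div_pow_of_lt {ℓ d : ℕ} (h : ℓ < d) :
    Tendsto (fun N : ℕ => (N : 𝕜) ^ ℓ / (N : 𝕜) ^ d) atTop (𝓝 0) := by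
  have hinv : Tendsto (fun N : ℕ => ((N : 𝕜)⁻¹) ^ (d - ℓ)) atTop (𝓝 0) := by
    simpa [zero_pow (Nat.sub_ne_zero_of_lt h)] using
      (((tendsto_inv₀_cobounded (α := 𝕜)).comp tendsto_natCast_atTop_cobounded).pow (d - ℓ))
  refine hinv.congr' ((eventually_ne_atTop 0).mono fun N hN => ?_)
  have hN : (N : 𝕜) ^ ℓ ≠ 0 := pow_ne_zero _ (Nat.cast_ne_zero.2 hN)
  dsimp only
  rw [inv_pow, ← div_mul_cancel_left₀ hN, ← pow_add, Nat.add_sub_cancel' h.le]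

theorem tendsto_sum_range_mul_natCast_pow_div_pow (c : ℕ → 𝕜) (d : ℕ) :
    Tendsto (fun N : ℕ => (∑ ℓ ∈ Finset.range d, c ℓ * (N : 𝕜) ^ ℓ) / (N : 𝕜) ^ d)
      atTop (𝓝 0) := by
  simp_rw [Finset.sum_div, mul_div_assoc]
  simpa using tendsto_finsetSum _ fun ℓ hℓ =>
    (tendsto_natCast_pow_div_pow_of_lt (𝕜 := 𝕜) (Finset.mem_range.1 hℓ)).const_mul (c ℓ)

theorem tendsto_sum_range_succ_mul_natCast_pow_div_pow (c : ℕ → 𝕜) (d : ℕ) :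
    Tendsto (fun N : ℕ => (∑ ℓ ∈ Finset.range (d + 1), c ℓ * (N : 𝕜) ^ ℓ) / (N : 𝕜) ^ d)
      atTop (𝓝 (c d)) := by
  have h := (tendsto_sum_range_mul_natCast_pow_div_pow c d).add_const (c d)
  rw [zero_add] at h
  refine h.congr' ((eventually_ne_atTop 0).mono fun N hN => ?_)
  have hN : (N : 𝕜) ^ d ≠ 0 := pow_ne_zero _ (Nat.cast_ne_zero.2 hN)
  dsimp only
  rw [Finset.sum_range_succ, add_div, mul_div_cancel_right₀ _ hN]

theorem eventually_norm_sum_range_lt_mul_norm (a b : ℕ → 𝕜) {d : ℕ} (hb : b d ≠ 0) {c : ℝ}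
    (hc : 0 < c) : ∀ᶠ N : ℕ in atTop,
      ‖∑ ℓ ∈ Finset.range d, a ℓ * (N : 𝕜) ^ ℓ‖ <
        c * ‖∑ ℓ ∈ Finset.range (d + 1), b ℓ * (N : 𝕜) ^ ℓ‖ := by
  have hlow := tendsto_sum_range_mul_natCast_pow_div_pow a d
  have htop := tendsto_sum_range_succ_mul_natCast_pow_div_pow b d
  have hratio := (hlow.div htop hb).norm
  rw [zero_div, norm_zero] at hratio
  filter_upwards [hratio.eventually_lt_const hc, htop.eventually_ne hb,
    eventually_ne_atTop 0] with N hlt hne hN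
  have hN : (N : 𝕜) ^ d ≠ 0 := pow_ne_zero _ (Nat.cast_ne_zero.2 hN)
  have hL : ∑ ℓ ∈ Finset.range (d + 1), b ℓ * (N : 𝕜) ^ ℓ ≠ 0 := fun h => hne (by simp [h])
  rw [Pi.div_apply, div_div_div_cancel_right₀ hN, norm_div, div_lt_iff₀ (norm_pos_iff.2 hL)] at hlt
  exact hlt

end Asymptotics

section Eckhoff

open Finset

variable (d N : ℕ) (ω : ℂ) (α : ℕ → ℂ)

theorem eckhoffPPoly_coeff_succ :
    (eckhoffPPoly d N ω α).coeff (d + 1) = eckhoffM d ω α N := by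
  rw [eckhoffPPoly, finsetSum_coeff, sum_eq_single 0]
  · simp
  · intro j _ hj0
    rw [coeff_C_mul, coeff_X_pow, if_neg (by omega), mul_zero]
  · simp

theorem eckhoffPPoly_degree_le : (eckhoffPPoly d N ω α).degree ≤ (d + 1 : ℕ) :=
  (degree_sum_le _ _).trans <| Finset.sup_le fun _ _ =>
    (degree_C_mul_X_pow_le _ _).trans (Nat.cast_le.2 (Nat.sub_le _ _))

theorem eckhoffPPoly_eval_mul_ofReal (x : ℝ) :
    (eckhoffPPoly d N ω α).eval (ω ^ N * x) =
      ω ^ (N * (d + 2)) * ∑ ℓ ∈ range (d + 1), α ℓ * (N : ℂ) ^ ℓ * eckhoffS d ℓ x := by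
  simp only [eckhoffPPoly, eckhoffM, eckhoffS, eval_finsetSum, eval_mul, eval_C, eval_pow,
    eval_X]
  push_cast
  simp only [mul_sum, sum_mul]
  rw [sum_comm]
  refine sum_congr rfl fun ℓ _ => sum_congr rfl fun j hj => ?_
  have hpow : ω ^ ((j + 1) * N) * (ω ^ N) ^ (d + 1 - j) = ω ^ (N * (d + 2)) := by
    rw [← pow_mul, ← pow_add]
    congr 1
    have hjd := mem_range.1 hj
    rw [Nat.mul_comm (j + 1) N, ← Nat.mul_add]
    congr 1
    omega
  rw [← hpow, mul_pow, mul_pow]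
  ring

theorem norm_eval_eckhoffPPoly_of_eckhoffS_eq_zero (hω : ‖ω‖ = 1) {x : ℝ}
    (hx : eckhoffS d d x = 0) :
    ‖(eckhoffPPoly d N ω α).eval (ω ^ N * x)‖ =
      ‖∑ ℓ ∈ range d, α ℓ * eckhoffS d ℓ x * (N : ℂ) ^ ℓ‖ := by
  rw [eckhoffPPoly_eval_mul_ofReal, norm_mul, norm_pow, hω, one_pow, one_mul, sum_range_succ,
    hx, Complex.ofReal_zero, mul_zero, add_zero]
  simp_rw [mul_right_comm _ ((N : ℂ) ^ _)]

theorem norm_eckhoffM (hω : ‖ω‖ = 1) :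
    ‖eckhoffM d ω α N‖ = ‖∑ ℓ ∈ range (d + 1), α ℓ * (N : ℂ) ^ ℓ‖ := by
  rw [eckhoffM, norm_mul, norm_pow, hω, one_pow, one_mul]

end Eckhoff

theorem eckhoffPPoly_roots_converge_general (d : ℕ) (ω : ℂ) (hω : ‖ω‖ = 1) (α : ℕ → ℂ)
    (hα : α d ≠ 0) (w : Fin (d + 1) → ℝ) (hwmono : StrictMono w)
    (hwroot : ∀ r, eckhoffS d d (w r) = 0) :
    ∀ ε : ℝ, 0 < ε → ∃ N₀ : ℕ, ∀ N : ℕ, N₀ ≤ N →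
      (eckhoffPPoly d N ω α).degree = (d + 1 : ℕ) ∧
      ∃ u : Fin (d + 1) → ℂ,
        (eckhoffPPoly d N ω α).roots = Multiset.map u (Finset.univ : Finset (Fin (d + 1))).val ∧
        ∀ r, ‖u r - ω ^ N * (w r : ℂ)‖ ≤ ε := by
  intro ε hε
  obtain ⟨δ', hδ', hsep'⟩ := exists_pos_pairwise_lt_dist hwmono.injective
  set δ := min ε (δ' / 2)
  have hδ : 0 < δ := lt_min hε (half_pos hδ')
  have hsep : ∀ N, Pairwise fun r r' => 2 * δ ≤ ‖ω ^ N * (w r : ℂ) - ω ^ N * (w r' : ℂ)‖ := by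
    intro N r r' hrr'
    rw [← mul_sub, norm_mul, norm_pow, hω, one_pow, one_mul, ← Complex.ofReal_sub,
      Complex.norm_real, ← dist_eq_norm]
    linarith [hsep' hrr', min_le_right ε (δ' / 2)]
  obtain ⟨N₀, hN₀⟩ := eventually_atTop.1 <| eventually_all.2 fun r =>
    eventually_norm_sum_range_lt_mul_norm (fun ℓ => α ℓ * eckhoffS d ℓ (w r)) α hα
      (pow_pos hδ (d + 1))
  refine ⟨N₀, fun N hN => ?_⟩
  have heval : ∀ r, ‖(eckhoffPPoly d N ω α).eval (ω ^ N * w r)‖ <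
      ‖(eckhoffPPoly d N ω α).coeff (d + 1)‖ * δ ^ (d + 1) := fun r => by
    rw [norm_eval_eckhoffPPoly_of_eckhoffS_eq_zero d N ω α hω (hwroot r),
      eckhoffPPoly_coeff_succ, norm_eckhoffM d N ω α hω, mul_comm]
    exact hN₀ N hN r
  have hdeg : (eckhoffPPoly d N ω α).degree = (d + 1 : ℕ) :=
    (eckhoffPPoly_degree_le d N ω α).antisymm <| le_degree_of_ne_zero fun h =>
      (norm_nonneg _).not_gt (by simpa [h] using heval 0)
  have hnat := natDegree_eq_of_degree_eq_some hdeg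
  obtain ⟨u, hroots, hnear⟩ := (eckhoffPPoly d N ω α).exists_roots_eq_map_of_norm_eval_lt
    (by simp [hnat]) _ hδ.le (hsep N) (by simpa [leadingCoeff, hnat] using heval)
  exact ⟨hdeg, u, hroots, fun r => (hnear r).le.trans (min_le_left _ _)⟩

/-- if `|ω| = 1`, `α_d ≠ 0` and `1 = w_1 < w_2 < … < w_{d+1}` are the real
simple roots of `s_d^d`, then for every `ε > 0` and all large `N`, `p_N^d` has degree
exactly `d+1` and its roots (with multiplicity) can be enumerated as `u_r^{(N)}` with
`|u_r^{(N)} − ω^N w_r| ≤ ε`. -/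
theorem eckhoffPPoly_roots_converge (d : ℕ) (ω : ℂ) (hω : ‖ω‖ = 1) (α : ℕ → ℂ)
    (hα : α d ≠ 0) (w : Fin (d + 1) → ℝ) (hw0 : w 0 = 1) (hwmono : StrictMono w)
    (hwroot : ∀ r, eckhoffS d d (w r) = 0) :
    ∀ ε : ℝ, 0 < ε → ∃ N₀ : ℕ, ∀ N : ℕ, N₀ ≤ N →
      (eckhoffPPoly d N ω α).degree = (d + 1 : ℕ) ∧
      ∃ u : Fin (d + 1) → ℂ,
        (eckhoffPPoly d N ω α).roots = Multiset.map u (Finset.univ : Finset (Fin (d + 1))).val ∧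
        ∀ r, ‖u r - ω ^ N * (w r : ℂ)‖ ≤ ε :=
  eckhoffPPoly_roots_converge_general d ω hω α hα w hwmono hwroot
end

section
/- The derivative of p_N^d at the root u = z = ω^N equals (d/du) p_N^d(u) |_{u=z} = (−1)^d · (d+1)! · α_d · N^d · z^{d+1}; in particular, if |ω| = 1 then |(d/du) p_N^d(u) |_{u=z}| = (d+1)! · |α_d| · N^d. -/
/-!
Differentiating termwise, `(d + 1 - j) * C(d + 1, j) = (d + 1) * C(d, j)`, and at `u = z = ω ^ N`
every term carries the same power `z ^ (d + 1)`, because `m_{(j+1)N} = z ^ (j + 1) * q (j + 1)`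
with `q x = Σ_ℓ α_ℓ N^ℓ x^ℓ`. What remains is `Σ_j (-1)^j C(d, j) q (j + 1)`, which is `(-1)^d`
times the `d`-th forward difference of `q` at `1`; that difference annihilates the monomials of
degree `< d` and sends `x ^ d` to `d!`.
-/

open Complex

open Finset Nat fwdDiff

theorem fwdDiff_iter_sum_range_succ_mul_pow {R : Type*} [CommRing R] (d : ℕ) (c : ℕ → R) :
    Δ_[1] ^[d] (fun r : R ↦ ∑ ℓ ∈ range (d + 1), c ℓ * r ^ ℓ) = fun _ ↦ c d * d ! := by
  have hsplit : (fun r : R ↦ ∑ ℓ ∈ range (d + 1), c ℓ * r ^ ℓ) =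
      (fun r ↦ ∑ ℓ ∈ range d, c ℓ * r ^ ℓ) + c d • fun r ↦ r ^ d := by
    ext r
    simp [sum_range_succ]
  rw [hsplit, fwdDiff_iter_add, fwdDiff_iter_sum_mul_pow_eq_zero, fwdDiff_iter_const_smul,
    fwdDiff_iter_eq_factorial]
  ext r
  simp

theorem sum_range_neg_one_pow_mul_choose_mul_sum_mul_pow {R : Type*} [CommRing R] (d : ℕ)
    (c : ℕ → R) (y : R) :
    ∑ j ∈ range (d + 1), (-1) ^ j * (d.choose j : R) * ∑ ℓ ∈ range (d + 1), c ℓ * (y + j) ^ ℓ =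
      (-1) ^ d * d ! * c d := by
  have h := congrFun (fwdDiff_iter_sum_range_succ_mul_pow d c) y
  rw [fwdDiff_iter_eq_sum_shift] at h
  rw [show (-1) ^ d * (d ! : R) * c d = (-1) ^ d * (c d * d !) by ring, ← h, mul_sum]
  refine sum_congr rfl fun j hj ↦ ?_
  have hj : j ≤ d := Nat.lt_succ_iff.mp (mem_range.mp hj)
  rw [zsmul_eq_mul, nsmul_one]
  push_cast
  rw [← mul_assoc, ← mul_assoc, ← pow_add, ← Nat.add_sub_assoc hj,
    show d + d - j = j + 2 * (d - j) by omega, pow_add, pow_mul, neg_one_sq, one_pow, mul_one]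

theorem hasDerivAt_sum_range_neg_one_pow_mul_choose_mul_pow {𝕜 : Type*}
    [NontriviallyNormedField 𝕜] (n : ℕ) (b : ℕ → 𝕜) (z : 𝕜) :
    HasDerivAt
      (fun u ↦ ∑ j ∈ range (n + 2), (-1) ^ j * ((n + 1).choose j : 𝕜) * b j * u ^ (n + 1 - j))
      ((n + 1) * ∑ j ∈ range (n + 1), (-1) ^ j * (n.choose j : 𝕜) * b j * z ^ (n - j)) z := by
  refine (HasDerivAt.fun_sum fun j _ ↦ (hasDerivAt_pow (n + 1 - j) z).const_mul
    ((-1) ^ j * ((n + 1).choose j : 𝕜) * b j)).congr_deriv ?_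
  rw [sum_range_succ, Nat.sub_self, Nat.cast_zero, zero_mul, mul_zero, add_zero, mul_sum]
  refine sum_congr rfl fun j hj ↦ ?_
  have hj : j ≤ n := Nat.lt_succ_iff.mp (mem_range.mp hj)
  have hchoose : ((n + 1 - j : ℕ) : 𝕜) * ((n + 1).choose j : 𝕜) = (n + 1) * (n.choose j : 𝕜) := by
    have h : (n + 1 - j) * (n + 1).choose j = (n + 1) * n.choose j := by
      rw [mul_comm, ← Nat.choose_mul_succ_eq, mul_comm]
    simpa only [Nat.cast_mul, Nat.cast_add_one] using congrArg (Nat.cast : ℕ → 𝕜) h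
  rw [show n + 1 - j - 1 = n - j by omega]
  linear_combination ((-1) ^ j * b j * z ^ (n - j)) * hchoose

theorem eckhoffM_mul (d : ℕ) (ω : ℂ) (α : ℕ → ℂ) (k N : ℕ) :
    eckhoffM d ω α (k * N) = eckhoffM d (ω ^ N) (fun ℓ ↦ α ℓ * N ^ ℓ) k := by
  simp only [eckhoffM, Nat.cast_mul, mul_pow, ← pow_mul, mul_comm k N, mul_assoc]

theorem eckhoffM_succ_mul_pow_sub {d j : ℕ} (hj : j ≤ d) (z : ℂ) (c : ℕ → ℂ) :
    eckhoffM d z c (j + 1) * z ^ (d - j) =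
      z ^ (d + 1) * ∑ ℓ ∈ range (d + 1), c ℓ * (1 + j) ^ ℓ := by
  rw [eckhoffM, mul_right_comm, ← pow_add, show j + 1 + (d - j) = d + 1 by omega]
  push_cast
  simp only [add_comm (1 : ℂ)]

theorem eckhoffP_deriv_at_root_general (d N : ℕ) (ω : ℂ) (α : ℕ → ℂ) :
    deriv (eckhoffP d N ω α) (ω ^ N)
        = (-1 : ℂ) ^ d * (Nat.factorial (d + 1) : ℂ) * α d * (N : ℂ) ^ d *
            (ω ^ N) ^ (d + 1) ∧
      (‖ω‖ = 1 →
        ‖deriv (eckhoffP d N ω α) (ω ^ N)‖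
          = (Nat.factorial (d + 1) : ℝ) * ‖α d‖ * (N : ℝ) ^ d) := by
  set z := ω ^ N
  have hD : HasDerivAt (eckhoffP d N ω α) _ z :=
    hasDerivAt_sum_range_neg_one_pow_mul_choose_mul_pow d
      (fun j ↦ eckhoffM d ω α ((j + 1) * N)) z
  have hderiv : deriv (eckhoffP d N ω α) z =
      (-1) ^ d * ((d + 1) ! : ℂ) * α d * (N : ℂ) ^ d * z ^ (d + 1) := by
    calc deriv (eckhoffP d N ω α) z
        = (d + 1) * z ^ (d + 1) * ∑ j ∈ range (d + 1), (-1) ^ j * (d.choose j : ℂ) *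
            ∑ ℓ ∈ range (d + 1), α ℓ * N ^ ℓ * (1 + j) ^ ℓ := by
          rw [hD.deriv, mul_assoc _ (z ^ (d + 1))]
          congr 1
          rw [mul_sum]
          refine sum_congr rfl fun j hj ↦ ?_
          rw [eckhoffM_mul, mul_assoc,
            eckhoffM_succ_mul_pow_sub (Nat.lt_succ_iff.mp (mem_range.mp hj))]
          ring
      _ = _ := by
          rw [sum_range_neg_one_pow_mul_choose_mul_sum_mul_pow, factorial_succ]
          push_cast
          ring
  refine ⟨hderiv, fun hω ↦ ?_⟩
  simp [hderiv, z, norm_pow, hω]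

/-- `(d/du)p_N^d(u)|_{u=z} = (−1)^d (d+1)! α_d N^d z^{d+1}` where `z = ω^N`;
in particular for `|ω| = 1` its modulus equals `(d+1)!·|α_d|·N^d`. -/
theorem eckhoffP_deriv_at_root (d N : ℕ) (hN : 1 ≤ N) (ω : ℂ) (α : ℕ → ℂ) :
    deriv (eckhoffP d N ω α) (ω ^ N)
        = (-1 : ℂ) ^ d * (Nat.factorial (d + 1) : ℂ) * α d * (N : ℂ) ^ d *
            (ω ^ N) ^ (d + 1) ∧
      (‖ω‖ = 1 →
        ‖deriv (eckhoffP d N ω α) (ω ^ N)‖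
          = (Nat.factorial (d + 1) : ℝ) * ‖α d‖ * (N : ℝ) ^ d) :=
  eckhoffP_deriv_at_root_general d N ω α
end

section
/- Let ω ∈ ℂ with |ω| = 1, let N ≥ 1 be an integer, and let z̃ ∈ ℂ satisfy |z̃ − ω^N| ≤ ε for some real ε with 0 ≤ ε ≤ 1/2. Then there exists ω̃ ∈ ℂ with ω̃^N = z̃ and |ω̃ − ω| ≤ 3ε/N; that is, extraction of an appropriately chosen N-th root decreases the perturbation by a factor of order 1/N. -/
/-!
Divide out `ω ^ N`: it suffices to take an `N`-th root of `1 + δ` with `‖δ‖ ≤ 1/2` close to `1`.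
The principal one, `exp (log (1 + δ) / N)`, works: `‖log (1 + δ)‖ ≤ 3/2 ‖δ‖` on the disc of
radius `1/2`, and `‖exp w - 1‖ ≤ 2 ‖w‖` for `‖w‖ ≤ 1`.
-/

open Complex

namespace Complex

lemma exists_pow_eq_one_add_norm_sub_one_le {δ : ℂ} (hδ : ‖δ‖ ≤ 1 / 2) {N : ℕ} (hN : N ≠ 0) :
    ∃ u : ℂ, u ^ N = 1 + δ ∧ ‖u - 1‖ ≤ 3 * ‖δ‖ / N := by
  have hN1 : (1 : ℝ) ≤ N := by exact_mod_cast Nat.one_le_iff_ne_zero.mpr hN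
  have h1δ : 1 + δ ≠ 0 := by
    intro h
    have : ‖δ‖ = 1 := by rw [eq_neg_of_add_eq_zero_right h, norm_neg, norm_one]
    linarith
  set w := log (1 + δ) / N
  have hw : ‖w‖ ≤ 3 / 2 * ‖δ‖ / N := by
    rw [norm_div, norm_natCast]
    gcongr
    exact norm_log_one_add_half_le_self hδ
  have hw_le_one : ‖w‖ ≤ 1 :=
    calc ‖w‖ ≤ 3 / 2 * ‖δ‖ / N := hw
      _ ≤ 3 / 2 * (1 / 2) / 1 := by gcongr
      _ ≤ 1 := by norm_num
  refine ⟨exp w, ?_, ?_⟩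
  · rw [← exp_nat_mul, mul_div_cancel₀ _ (Nat.cast_ne_zero.mpr hN), exp_log h1δ]
  · calc ‖exp w - 1‖ ≤ 2 * ‖w‖ := norm_exp_sub_one_le hw_le_one
      _ ≤ 2 * (3 / 2 * ‖δ‖ / N) := by gcongr
      _ = 3 * ‖δ‖ / N := by ring

lemma exists_pow_eq_norm_sub_le_of_norm_eq_one {ω z : ℂ} (hω : ‖ω‖ = 1) {N : ℕ} (hN : N ≠ 0)
    (hz : ‖z - ω ^ N‖ ≤ 1 / 2) :
    ∃ ωt : ℂ, ωt ^ N = z ∧ ‖ωt - ω‖ ≤ 3 * ‖z - ω ^ N‖ / N := by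
  have hωN : ω ^ N ≠ 0 := pow_ne_zero _ (norm_ne_zero_iff.mp (by simp [hω]))
  have hnorm : ‖(z - ω ^ N) / ω ^ N‖ = ‖z - ω ^ N‖ := by simp [hω]
  obtain ⟨u, hu, hu1⟩ := exists_pow_eq_one_add_norm_sub_one_le (hnorm ▸ hz) hN
  refine ⟨ω * u, ?_, ?_⟩
  · rw [mul_pow, hu]
    field_simp
    ring
  · rw [← mul_sub_one, norm_mul, hω, one_mul, ← hnorm]
    exact hu1

end Complex

theorem nth_root_extraction_accuracy_general (ω : ℂ) (hω : ‖ω‖ = 1) (N : ℕ) (hN : 1 ≤ N)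
    (zt : ℂ) (ε : ℝ) (hε : ε ≤ 1 / 2) (hz : ‖zt - ω ^ N‖ ≤ ε) :
    ∃ ωt : ℂ, ωt ^ N = zt ∧ ‖ωt - ω‖ ≤ 3 * ε / N := by
  obtain ⟨ωt, hωt, hclose⟩ :=
    exists_pow_eq_norm_sub_le_of_norm_eq_one hω (Nat.one_le_iff_ne_zero.mp hN) (hz.trans hε)
  exact ⟨ωt, hωt, hclose.trans (by gcongr)⟩

/-- root extraction step. If `|ω| = 1` and `|z̃ − ω^N| ≤ ε ≤ 1/2`, then
some `N`-th root `ω̃` of `z̃` satisfies `|ω̃ − ω| ≤ 3ε/N`. -/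
theorem nth_root_extraction_accuracy (ω : ℂ) (hω : ‖ω‖ = 1) (N : ℕ) (hN : 1 ≤ N)
    (zt : ℂ) (ε : ℝ) (hε0 : 0 ≤ ε) (hε : ε ≤ 1 / 2) (hz : ‖zt - ω ^ N‖ ≤ ε) :
    ∃ ωt : ℂ, ωt ^ N = zt ∧ ‖ωt - ω‖ ≤ 3 * ε / N :=
  nth_root_extraction_accuracy_general ω hω N hN zt ε hε hz
end

section
/- For every integer d ≥ 0 there exist constants C_4 > 0 and C_{5,0}, …, C_{5,d} > 0 depending only on d with the following property: for all real numbers A* ≥ B* > 0 and R* > 0 there exists N_0 such that for every integer N ≥ N_0, every ω ∈ ℂ with |ω| = 1, every α_0, …, α_d ∈ ℂ with |α_ℓ| ≤ A* for all ℓ and |α_d| ≥ B*, every choice of perturbed values m̃_{jN} ∈ ℂ (j = 1, …, d+1) with |m̃_{jN} − m_{jN}| ≤ R*·(jN)^{−1}, and every nonzero ω̃ ∈ ℂ with |ω̃ − ω| ≤ C_4 · (R*/B*) · N^{−d−2}, the unique vector (α̃_0, …, α̃_d) ∈ ℂ^{d+1} solving the Vandermonde linear system Σ_{ℓ=0}^{d}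 α̃_ℓ (jN)^{ℓ} = m̃_{jN} · ω̃^{−jN} for j = 1, …, d+1 satisfies |α̃_ℓ − α_ℓ| ≤ C_{5,ℓ} · R* · (1 + A*/B*) · N^{−ℓ−1} for every ℓ = 0, 1, …, d. -/
open Complex

/-!
Subtracting the exact system from the perturbed one, the rescaled errors
`β_ℓ = (α̃_ℓ - α_ℓ) N^ℓ` solve the fixed Vandermonde system with nodes `1, …, d+1` whose
right-hand side is `e_j = m̃_{jN} ω̃^{-jN} - m_{jN} ω^{-jN}`, so `|β_ℓ| ≤ C max_j |e_j|` with `C`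
depending only on `d`. For `k = jN ≤ (d+1)N` the jump accuracy gives `k |ω̃ - ω| ≤ 1/4` once `N`
is large, hence `|ω̃^{-k}| ≤ 4/3` and `|ω̃^{-k} - ω^{-k}| ≤ 2k |ω̃ - ω|`; with
`|m_k| ≤ (d+1) A* k^d` this bounds every `|e_j|` by a multiple of `R* (1 + A*/B*) / N`.
-/

open Finset
open scoped Matrix

theorem norm_pow_sub_pow_le {R : Type*} [SeminormedCommRing R] [NormOneClass R] {x y : R} {M : ℝ}
    (hx : ‖x‖ ≤ M) (hy : ‖y‖ ≤ M) (n : ℕ) : ‖x ^ n - y ^ n‖ ≤ n * M ^ (n - 1) * ‖x - y‖ := by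
  have hM : 0 ≤ M := (norm_nonneg x).trans hx
  have hterm : ∀ i ∈ range n, ‖x ^ i * y ^ (n - 1 - i)‖ ≤ M ^ (n - 1) := fun i hi => by
    calc ‖x ^ i * y ^ (n - 1 - i)‖ ≤ ‖x‖ ^ i * ‖y‖ ^ (n - 1 - i) :=
          (norm_mul_le _ _).trans (mul_le_mul (norm_pow_le _ _) (norm_pow_le _ _)
            (norm_nonneg _) (by positivity))
      _ ≤ M ^ i * M ^ (n - 1 - i) := by gcongr
      _ = M ^ (n - 1) := by rw [← pow_add, Nat.add_sub_cancel' (by grind)]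
  rw [← geom_sum₂_mul]
  refine (norm_mul_le _ _).trans (mul_le_mul_of_nonneg_right ?_ (norm_nonneg _))
  simpa using (norm_sum_le _ _).trans (sum_le_sum hterm)

section PowerBounds

variable {x δ : ℝ} {k : ℕ}

theorem three_quarters_le_pow (hδ : 0 ≤ δ) (hkδ : k * δ ≤ 1 / 4) (hx : 1 - δ ≤ x) :
    3 / 4 ≤ x ^ k := by
  obtain rfl | hk := k.eq_zero_or_pos
  · norm_num
  have hδ' : δ ≤ 1 / 4 := (le_mul_of_one_le_left hδ (Nat.one_le_cast.mpr hk)).trans hkδ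
  have hbernoulli := one_add_mul_le_pow (a := -δ) (by linarith) k
  calc 3 / 4 ≤ (1 + -δ) ^ k := by linarith
    _ ≤ x ^ k := by gcongr <;> linarith

theorem pow_le_four_thirds (hx₀ : 0 ≤ x) (hx : x ≤ 1 + δ) (hkδ : k * δ ≤ 1 / 4) :
    x ^ k ≤ 4 / 3 := by
  have hexp : Real.exp (k * δ) ≤ 4 / 3 := by
    have := Real.add_one_le_exp (-(k * δ))
    rw [Real.exp_neg] at this
    rw [← inv_inv (Real.exp _), show (4 / 3 : ℝ) = (3 / 4)⁻¹ by norm_num]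
    exact inv_anti₀ (by norm_num) (by linarith)
  calc x ^ k ≤ Real.exp δ ^ k := by gcongr; linarith [Real.add_one_le_exp δ]
    _ = Real.exp (k * δ) := (Real.exp_nat_mul δ k).symm
    _ ≤ 4 / 3 := hexp

theorem pow_mul_le_of_le_mul {c N s : ℝ} (hx₀ : 0 ≤ x) (hx : x ≤ c * N) (hN : 0 < N) (hs : 0 ≤ s)
    (n : ℕ) : x ^ n * (s * (N ^ (n + 1))⁻¹) ≤ c ^ n * s / N := by
  calc x ^ n * (s * (N ^ (n + 1))⁻¹) ≤ (c * N) ^ n * (s * (N ^ (n + 1))⁻¹) := by gcongr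
    _ = c ^ n * s / N := by field_simp; ring

end PowerBounds

section UnitCirclePerturbation

variable {ω ωt : ℂ} {δ : ℝ} {k : ℕ}

theorem three_quarters_le_norm_pow (hω : ‖ω‖ = 1) (hδ : ‖ωt - ω‖ ≤ δ) (hkδ : k * δ ≤ 1 / 4) :
    3 / 4 ≤ ‖ωt ^ k‖ := by
  rw [norm_pow]
  refine three_quarters_le_pow ((norm_nonneg _).trans hδ) hkδ ?_
  linarith [norm_sub_norm_le ω ωt, norm_sub_rev ω ωt]

theorem norm_inv_pow_le (hω : ‖ω‖ = 1) (hδ : ‖ωt - ω‖ ≤ δ) (hkδ : k * δ ≤ 1 / 4) :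
    ‖(ωt ^ k)⁻¹‖ ≤ 4 / 3 := by
  rw [norm_inv, show (4 / 3 : ℝ) = (3 / 4)⁻¹ by norm_num]
  exact inv_anti₀ (by norm_num) (three_quarters_le_norm_pow hω hδ hkδ)

theorem norm_pow_sub_pow_le_of_norm_eq_one (hω : ‖ω‖ = 1) (hδ : ‖ωt - ω‖ ≤ δ)
    (hkδ : k * δ ≤ 1 / 4) : ‖ωt ^ k - ω ^ k‖ ≤ 4 / 3 * k * δ := by
  have hδ₀ : 0 ≤ δ := (norm_nonneg _).trans hδ
  have hup : ‖ωt‖ ≤ 1 + δ := by linarith [norm_sub_norm_le ωt ω]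
  have hpow : (1 + δ) ^ (k - 1) ≤ 4 / 3 := by
    refine pow_le_four_thirds (by linarith) le_rfl (le_trans ?_ hkδ)
    gcongr
    exact_mod_cast k.sub_le 1
  calc ‖ωt ^ k - ω ^ k‖ ≤ k * (1 + δ) ^ (k - 1) * ‖ωt - ω‖ :=
        norm_pow_sub_pow_le hup (by linarith) k
    _ ≤ k * (4 / 3) * δ := by gcongr
    _ = 4 / 3 * k * δ := by ring

theorem norm_inv_pow_sub_inv_pow_le (hω : ‖ω‖ = 1) (hδ : ‖ωt - ω‖ ≤ δ) (hkδ : k * δ ≤ 1 / 4) :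
    ‖(ωt ^ k)⁻¹ - (ω ^ k)⁻¹‖ ≤ 2 * k * δ := by
  have hωt : ωt ^ k ≠ 0 := norm_pos_iff.mp <|
    (by norm_num : (0 : ℝ) < 3 / 4).trans_le (three_quarters_le_norm_pow hω hδ hkδ)
  have hωk : ‖(ω ^ k)⁻¹‖ = 1 := by simp [hω]
  rw [inv_sub_inv' hωt (pow_ne_zero k (norm_ne_zero_iff.mp (by simp [hω]))), norm_mul, norm_mul,
    hωk, mul_one, norm_sub_rev]
  have hδ₀ : 0 ≤ δ := (norm_nonneg _).trans hδ
  calc ‖(ωt ^ k)⁻¹‖ * ‖ωt ^ k - ω ^ k‖ ≤ 4 / 3 * (4 / 3 * k * δ) :=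
        mul_le_mul (norm_inv_pow_le hω hδ hkδ) (norm_pow_sub_pow_le_of_norm_eq_one hω hδ hkδ)
          (norm_nonneg _) (by norm_num)
    _ ≤ 2 * k * δ := by nlinarith [mul_nonneg (Nat.cast_nonneg k : (0 : ℝ) ≤ k) hδ₀]

theorem norm_mul_inv_pow_sub_mul_inv_pow_le (m mt : ℂ) (hω : ‖ω‖ = 1) (hδ : ‖ωt - ω‖ ≤ δ)
    (hkδ : k * δ ≤ 1 / 4) :
    ‖mt * (ωt ^ k)⁻¹ - m * (ω ^ k)⁻¹‖ ≤ 2 * ‖mt - m‖ + 2 * k * δ * ‖m‖ := by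
  rw [show mt * (ωt ^ k)⁻¹ - m * (ω ^ k)⁻¹
      = (mt - m) * (ωt ^ k)⁻¹ + m * ((ωt ^ k)⁻¹ - (ω ^ k)⁻¹) by ring]
  calc ‖(mt - m) * (ωt ^ k)⁻¹ + m * ((ωt ^ k)⁻¹ - (ω ^ k)⁻¹)‖
      ≤ ‖mt - m‖ * ‖(ωt ^ k)⁻¹‖ + ‖m‖ * ‖(ωt ^ k)⁻¹ - (ω ^ k)⁻¹‖ := by
        rw [← norm_mul, ← norm_mul]
        exact norm_add_le _ _
    _ ≤ ‖mt - m‖ * 2 + ‖m‖ * (2 * k * δ) := by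
        gcongr
        · linarith [norm_inv_pow_le hω hδ hkδ]
        · exact norm_inv_pow_sub_inv_pow_le hω hδ hkδ
    _ = 2 * ‖mt - m‖ + 2 * k * δ * ‖m‖ := by ring

end UnitCirclePerturbation

theorem vandermonde_mulVec_mul_pow {R : Type*} [CommRing R] {n : ℕ} (x : Fin n → R) (c : ℕ → R)
    (s : R) (i : Fin n) :
    (Matrix.vandermonde x *ᵥ fun ℓ => c ℓ * s ^ (ℓ : ℕ)) i
      = ∑ ℓ ∈ range n, c ℓ * (x i * s) ^ ℓ := by
  simp only [Matrix.mulVec, dotProduct, Matrix.vandermonde_apply]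
  rw [Fin.sum_univ_eq_sum_range (fun ℓ => x i ^ ℓ * (c ℓ * s ^ ℓ))]
  exact sum_congr rfl fun ℓ _ => by ring

theorem vandermonde_mulVec_sub_eq {d N : ℕ} {α αt : ℕ → ℂ} {y : ℕ → ℂ}
    (hαt : ∀ j, 1 ≤ j → j ≤ d + 1 →
      ∑ ℓ ∈ range (d + 1), αt ℓ * ((j * N : ℕ) : ℂ) ^ ℓ = y j) (i : Fin (d + 1)) :
    (Matrix.vandermonde (fun i : Fin (d + 1) => ((i + 1 : ℕ) : ℂ)) *ᵥ
        fun ℓ => (αt ℓ - α ℓ) * (N : ℂ) ^ (ℓ : ℕ)) i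
      = y (i + 1) - ∑ ℓ ∈ range (d + 1), α ℓ * (((i + 1) * N : ℕ) : ℂ) ^ ℓ := by
  rw [vandermonde_mulVec_mul_pow _ (fun ℓ => αt ℓ - α ℓ), ← Nat.cast_mul]
  simp only [sub_mul, sum_sub_distrib]
  rw [hαt (i + 1) (by omega) (by omega)]

theorem Matrix.exists_pos_norm_le_of_mulVec_le {𝕜 ι : Type*} [NormedField 𝕜] [Fintype ι]
    [DecidableEq ι] {W : Matrix ι ι 𝕜} (hW : W.det ≠ 0) :
    ∃ C > 0, ∀ (β : ι → 𝕜) (E : ℝ), (∀ i, ‖(W *ᵥ β) i‖ ≤ E) → ∀ i, ‖β i‖ ≤ C * E := by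
  let := Matrix.linftyOpNormedAddCommGroup (m := ι) (n := ι) (α := 𝕜)
  refine ⟨‖W⁻¹‖ + 1, by positivity, fun β E hE i => ?_⟩
  have hE₀ : 0 ≤ E := (norm_nonneg _).trans (hE i)
  have hβ : W⁻¹ *ᵥ (W *ᵥ β) = β := by
    rw [Matrix.mulVec_mulVec, Matrix.nonsing_inv_mul W (isUnit_iff_ne_zero.mpr hW),
      Matrix.one_mulVec]
  calc ‖β i‖ ≤ ‖β‖ := norm_le_pi_norm β i
    _ = ‖W⁻¹ *ᵥ (W *ᵥ β)‖ := by rw [hβ]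
    _ ≤ ‖W⁻¹‖ * ‖W *ᵥ β‖ := Matrix.linfty_opNorm_mulVec _ _
    _ ≤ ‖W⁻¹‖ * E := by gcongr; exact (pi_norm_le_iff_of_nonneg hE₀).mpr hE
    _ ≤ (‖W⁻¹‖ + 1) * E := by nlinarith

theorem eckhoffM_mul_inv_pow {d k : ℕ} {ω : ℂ} (hω : ω ≠ 0) (α : ℕ → ℂ) :
    eckhoffM d ω α k * (ω ^ k)⁻¹ = ∑ ℓ ∈ range (d + 1), α ℓ * (k : ℂ) ^ ℓ := by
  rw [eckhoffM, mul_comm, inv_mul_cancel_left₀ (pow_ne_zero k hω)]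

theorem norm_eckhoffM_le {d k : ℕ} {ω : ℂ} {α : ℕ → ℂ} {A : ℝ} (hω : ‖ω‖ = 1)
    (hα : ∀ ℓ ≤ d, ‖α ℓ‖ ≤ A) (hk : 1 ≤ k) : ‖eckhoffM d ω α k‖ ≤ (d + 1) * A * k ^ d := by
  rw [eckhoffM, norm_mul, norm_pow, hω, one_pow, one_mul]
  calc ‖∑ ℓ ∈ range (d + 1), α ℓ * (k : ℂ) ^ ℓ‖
      ≤ ∑ ℓ ∈ range (d + 1), ‖α ℓ‖ * (k : ℝ) ^ ℓ := by
        simpa only [norm_mul, norm_pow, Complex.norm_natCast] using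
          norm_sum_le (range (d + 1)) fun ℓ => α ℓ * (k : ℂ) ^ ℓ
    _ ≤ ∑ _ℓ ∈ range (d + 1), A * (k : ℝ) ^ d := by
        refine sum_le_sum fun ℓ hℓ => ?_
        have hℓd : ℓ ≤ d := Nat.lt_succ_iff.mp (mem_range.mp hℓ)
        gcongr
        · exact (norm_nonneg _).trans (hα 0 (Nat.zero_le d))
        · exact hα ℓ hℓd
        · exact_mod_cast hk
    _ = (d + 1) * A * k ^ d := by simp; ring

theorem norm_node_error_le {d k N : ℕ} {ω ωt mt : ℂ} {α : ℕ → ℂ} {A B R : ℝ}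
    (hB : 0 < B) (hR : 0 ≤ R) (hN₀ : 0 < N) (hN : 4 * (d + 1) ^ (d + 1) * (R / B) ≤ N)
    (hNk : N ≤ k) (hkN : k ≤ (d + 1) * N) (hω : ‖ω‖ = 1) (hα : ∀ ℓ ≤ d, ‖α ℓ‖ ≤ A)
    (hmt : ‖mt - eckhoffM d ω α k‖ ≤ R * (k : ℝ)⁻¹)
    (hδ : ‖ωt - ω‖ ≤ R / B * ((N : ℝ) ^ (d + 2))⁻¹) :
    ‖mt * (ωt ^ k)⁻¹ - ∑ ℓ ∈ range (d + 1), α ℓ * (k : ℂ) ^ ℓ‖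
      ≤ 2 * (1 + (d + 1) ^ (d + 2)) * R * (1 + A / B) / N := by
  have hNpos : (0 : ℝ) < N := by exact_mod_cast hN₀
  have hNk' : (N : ℝ) ≤ k := by exact_mod_cast hNk
  have hkN' : (k : ℝ) ≤ (d + 1) * N := by exact_mod_cast hkN
  have hk : 1 ≤ k := hN₀.trans_le hNk
  have hA : 0 ≤ A := (norm_nonneg _).trans (hα 0 d.zero_le)
  set δ := R / B * ((N : ℝ) ^ (d + 2))⁻¹
  have hpow : (k : ℝ) ^ (d + 1) * δ ≤ (d + 1) ^ (d + 1) * (R / B) / N :=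
    pow_mul_le_of_le_mul k.cast_nonneg hkN' hNpos (by positivity) (d + 1)
  have hkδ : k * δ ≤ 1 / 4 :=
    calc k * δ ≤ k ^ (d + 1) * δ := by
          gcongr
          exact le_self_pow₀ (by exact_mod_cast hk) (by omega)
      _ ≤ (d + 1) ^ (d + 1) * (R / B) / N := hpow
      _ ≤ 1 / 4 := by rw [div_le_iff₀ hNpos]; linarith
  calc ‖mt * (ωt ^ k)⁻¹ - ∑ ℓ ∈ range (d + 1), α ℓ * (k : ℂ) ^ ℓ‖
      = ‖mt * (ωt ^ k)⁻¹ - eckhoffM d ω α k * (ω ^ k)⁻¹‖ := by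
        rw [eckhoffM_mul_inv_pow (norm_ne_zero_iff.mp (by simp [hω]))]
    _ ≤ 2 * ‖mt - eckhoffM d ω α k‖ + 2 * k * δ * ‖eckhoffM d ω α k‖ :=
        norm_mul_inv_pow_sub_mul_inv_pow_le _ _ hω hδ hkδ
    _ ≤ 2 * (R * (k : ℝ)⁻¹) + 2 * k * δ * ((d + 1) * A * k ^ d) := by
        gcongr
        exact norm_eckhoffM_le hω hα hk
    _ = 2 * R * (k : ℝ)⁻¹ + 2 * (d + 1) * A * (k ^ (d + 1) * δ) := by ring
    _ ≤ 2 * R * (N : ℝ)⁻¹ + 2 * (d + 1) * A * ((d + 1) ^ (d + 1) * (R / B) / N) := by gcongr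
    _ ≤ 2 * (1 + (d + 1) ^ (d + 2)) * R * (1 + A / B) / N := by
        have hAB : 0 ≤ A / B := by positivity
        rw [show (2 * R * (N : ℝ)⁻¹ + 2 * (d + 1) * A * ((d + 1) ^ (d + 1) * (R / B) / N))
            = (2 * R + 2 * (d + 1) ^ (d + 2) * R * (A / B)) / N by ring]
        gcongr
        nlinarith [mul_nonneg hR hAB, mul_nonneg (by positivity : (0 : ℝ) ≤ (d + 1) ^ (d + 2)) hR]

/-- recovery of the magnitudes from the perturbed Vandermonde system.
There are constants `C₄ > 0` and `C₅ℓ > 0` depending only on `d` such that, under the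
a-priori bounds, the perturbations `|m̃_{jN} − m_{jN}| ≤ R*(jN)⁻¹` and the jump accuracy
`|ω̃ − ω| ≤ C₄ (R*/B*) N^{−d−2}`, the (unique) solution `α̃` of the linear system
`Σ_ℓ α̃_ℓ (jN)^ℓ = m̃_{jN} ω̃^{−jN}` (`j = 1, …, d+1`) satisfies
`|α̃_ℓ − α_ℓ| ≤ C₅ℓ R* (1 + A*/B*) N^{−ℓ−1}` for every `ℓ = 0, …, d`. -/
theorem eckhoff_magnitude_recovery_accuracy (d : ℕ) :
    ∃ C₄ : ℝ, 0 < C₄ ∧ ∃ C₅ : ℕ → ℝ, (∀ ℓ, 0 < C₅ ℓ) ∧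
      ∀ Astar Bstar Rstar : ℝ, 0 < Bstar → Bstar ≤ Astar → 0 < Rstar →
        ∃ N₀ : ℕ, ∀ N : ℕ, N₀ ≤ N → ∀ ω : ℂ, ‖ω‖ = 1 →
          ∀ α : ℕ → ℂ, (∀ ℓ ≤ d, ‖α ℓ‖ ≤ Astar) → Bstar ≤ ‖α d‖ →
          ∀ mt : ℕ → ℂ,
            (∀ j, 1 ≤ j → j ≤ d + 1 →
              ‖mt j - eckhoffM d ω α (j * N)‖ ≤ Rstar * (((j * N : ℕ) : ℝ))⁻¹) →
          ∀ ωt : ℂ, ωt ≠ 0 →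
            ‖ωt - ω‖ ≤ C₄ * (Rstar / Bstar) * ((N : ℝ) ^ (d + 2))⁻¹ →
          ∀ αt : ℕ → ℂ,
            (∀ j, 1 ≤ j → j ≤ d + 1 →
              ∑ ℓ ∈ Finset.range (d + 1), αt ℓ * ((j * N : ℕ) : ℂ) ^ ℓ
                = mt j * (ωt ^ (j * N))⁻¹) →
            ∀ ℓ ≤ d,
              ‖αt ℓ - α ℓ‖ ≤ C₅ ℓ * Rstar * (1 + Astar / Bstar) * ((N : ℝ) ^ (ℓ + 1))⁻¹ := by
  have hW : (Matrix.vandermonde fun i : Fin (d + 1) => ((i + 1 : ℕ) : ℂ)).det ≠ 0 :=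
    Matrix.det_vandermonde_ne_zero_iff.mpr fun i j h => Fin.ext (by simpa using h)
  obtain ⟨C, hC, hCW⟩ := Matrix.exists_pos_norm_le_of_mulVec_le hW
  set K : ℝ := 2 * (1 + (d + 1) ^ (d + 2))
  refine ⟨1, one_pos, fun _ => C * K, fun _ => by positivity, fun A B R hB hBA hR => ?_⟩
  refine ⟨⌈4 * (d + 1) ^ (d + 1) * (R / B)⌉₊ + 1,
    fun N hN ω hω α hα _ mt hmt ωt _ hδ αt hαt ℓ hℓ => ?_⟩
  have hN₀ : 0 < N := by omega
  have hNR : 4 * (d + 1) ^ (d + 1) * (R / B) ≤ N :=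
    (Nat.le_ceil _).trans (Nat.cast_le.mpr ((Nat.le_succ _).trans hN))
  have hℓN := hCW (fun ℓ => (αt ℓ - α ℓ) * (N : ℂ) ^ (ℓ : ℕ)) (K * R * (1 + A / B) / N)
    (fun i => by
      rw [vandermonde_mulVec_sub_eq hαt]
      exact norm_node_error_le hB hR.le hN₀ hNR (Nat.le_mul_of_pos_left N i.succ_pos)
        (Nat.mul_le_mul_right N i.isLt) hω hα (hmt _ (by omega) (by omega)) (by simpa using hδ))
    ⟨ℓ, by omega⟩
  rw [norm_mul, norm_pow, Complex.norm_natCast] at hℓN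
  have hNpos : (0 : ℝ) < N := by exact_mod_cast hN₀
  calc ‖αt ℓ - α ℓ‖ = ‖αt ℓ - α ℓ‖ * N ^ ℓ / N ^ ℓ := by field_simp
    _ ≤ C * (K * R * (1 + A / B) / N) / N ^ ℓ := by gcongr
    _ = C * K * R * (1 + A / B) * ((N : ℝ) ^ (ℓ + 1))⁻¹ := by field_simp; ring
end
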